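/- arXiv:2301.06635 — 2 statements merged into one kernel-verified Lean document; each statement's English description precedes it below -/
import Mathlib

section
/- Let g : R → R be a function that is infinitely differentiable at a point b_0 with g^(k)(b_0) ≠ 0 for all 0 ≤ k ≤ m-1, and let c_1, ..., c_N be distinct nonzero real numbers with m ≤ N. Then there exist real numbers t_1, ..., t_m such that the m vectors u_j = (g(c_1 t_j + b_0), ..., g(c_N t_j + b_0)) in R^N are linearly independent. -/
open Filter Topology Metric Matrix

noncomputable section

lemma my_iteratedDeriv_zero_fun (n : ℕ) (x : ℝ) :
    iteratedDeriv n (fun _ : ℝ => (0:ℝ)) x = 0 := by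
  induction n generalizing x with
  | zero => simp
  | succ k ih =>
    rw [iteratedDeriv_succ]
    have : (iteratedDeriv k fun _ : ℝ => (0:ℝ)) = fun _ => (0:ℝ) := funext fun y => ih y
    rw [this]
    simp

lemma my_iteratedDeriv_add {f g : ℝ → ℝ} (n : ℕ) (hf : ContDiff ℝ (n : WithTop ℕ∞) f)
    (hg : ContDiff ℝ (n : WithTop ℕ∞) g) (x : ℝ) :
    iteratedDeriv n (fun t => f t + g t) x = iteratedDeriv n f x + iteratedDeriv n g x := by
  have := iteratedDerivWithin_add (Set.mem_univ x) uniqueDiffOn_univ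
    (f := f) (g := g) (n := n)
    (hf.of_le le_rfl).contDiffAt.contDiffWithinAt
    (hg.of_le le_rfl).contDiffAt.contDiffWithinAt
  simp only [iteratedDerivWithin_univ] at this
  exact this

lemma my_iteratedDeriv_sum {ι : Type*} (s : Finset ι) (f : ι → ℝ → ℝ)
    (n : ℕ) (hf : ∀ i ∈ s, ContDiff ℝ (n : WithTop ℕ∞) (f i)) (x : ℝ) :
    iteratedDeriv n (fun t => ∑ i ∈ s, f i t) x = ∑ i ∈ s, iteratedDeriv n (f i) x := by
  classical
  induction s using Finset.cons_induction with
  | empty => simpa using my_iteratedDeriv_zero_fun n x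
  | cons a s ha ih =>
    rw [Finset.sum_cons]
    have h1 : ContDiff ℝ (n : WithTop ℕ∞) (f a) := hf a (Finset.mem_cons_self a s)
    have h2 : ContDiff ℝ (n : WithTop ℕ∞) (fun t => ∑ i ∈ s, f i t) := by
      apply ContDiff.sum
      intro i hi
      exact hf i (Finset.mem_cons_of_mem hi)
    have := my_iteratedDeriv_add n h1 h2 x
    simp only [Finset.sum_cons]
    rw [show (fun t => f a t + ∑ i ∈ s, f i t) = (fun t => f a t + (fun u => ∑ i ∈ s, f i u) t) from rfl,
      this, ih (fun i hi => hf i (Finset.mem_cons_of_mem hi))]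

-- key computation
lemma my_comp_deriv {G : ℝ → ℝ} (k : ℕ) (hG : ContDiff ℝ (k : WithTop ℕ∞) G) (c b₀ : ℝ) :
    iteratedDeriv k (fun s => G (c * s + b₀)) 0 = c ^ k * iteratedDeriv k G b₀ := by
  have h1 : ContDiff ℝ (k : WithTop ℕ∞) (fun z => G (z + b₀)) :=
    hG.comp (contDiff_id.add contDiff_const)
  have h2 := iteratedDeriv_comp_const_mul (n := k) (h1.of_le le_rfl) c
  have h3 := iteratedDeriv_comp_add_const k G b₀
  calc iteratedDeriv k (fun s => G (c * s + b₀)) 0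
      = iteratedDeriv k (fun s => (fun z => G (z + b₀)) (c * s)) 0 := rfl
    _ = c ^ k * iteratedDeriv k (fun z => G (z + b₀)) (c * 0) := by rw [h2]
    _ = c ^ k * iteratedDeriv k G b₀ := by rw [h3]; norm_num

lemma my_iteratedDeriv_cmul {f : ℝ → ℝ} (n : ℕ) (hf : ContDiff ℝ (n : WithTop ℕ∞) f)
    (a : ℝ) (x : ℝ) :
    iteratedDeriv n (fun t => a * f t) x = a * iteratedDeriv n f x := by
  have := iteratedDerivWithin_const_mul (Set.mem_univ x) uniqueDiffOn_univ (n := n) a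
    (hf.of_le le_rfl).contDiffAt.contDiffWithinAt
  simpa [iteratedDerivWithin_univ] using this

lemma my_escape {N : ℕ} {g G : ℝ → ℝ} {b₀ : ℝ}
    (k : ℕ) (hG : ContDiff ℝ (k : WithTop ℕ∞) G) (hGg : G =ᶠ[𝓝 b₀] g)
    (c : Fin N → ℝ) (W : Submodule ℝ (Fin N → ℝ))
    (hk : (fun i : Fin N => c i ^ k * iteratedDeriv k g b₀) ∉ W) :
    ∃ s : ℝ, (fun i : Fin N => g (c i * s + b₀)) ∉ W := by
  by_contra hcon
  push_neg at hcon
  obtain ⟨φ, hφv, hφW⟩ := W.exists_dual_map_eq_bot_of_notMem hk inferInstance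
  have hWker : ∀ w ∈ W, φ w = 0 := by
    intro w hw
    have : W ≤ LinearMap.ker φ := by
      intro y hy
      simp only [LinearMap.mem_ker]
      by_contra hne
      have : φ y ∈ Submodule.map φ W := ⟨y, hy, rfl⟩
      rw [hφW] at this
      exact hne (by simpa using this)
    simpa using this hw
  set a : Fin N → ℝ := fun i => φ (fun j => if i = j then 1 else 0) with ha
  have hφ_eq : ∀ x : Fin N → ℝ, φ x = ∑ i, x i * a i := by
    intro x
    rw [LinearMap.pi_apply_eq_sum_univ φ x]
    simp [smul_eq_mul]
    rfl
  -- F is eventually zero near 0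
  set F : ℝ → ℝ := fun s => ∑ i, a i * G (c i * s + b₀) with hF
  have hFev : F =ᶠ[𝓝 (0:ℝ)] (fun _ => (0:ℝ)) := by
    obtain ⟨V, hV, hVeq⟩ := eventually_iff_exists_mem.mp hGg
    have : ∀ᶠ s in 𝓝 (0:ℝ), ∀ i : Fin N, c i * s + b₀ ∈ V := by
      rw [eventually_all]
      intro i
      have hcont : Continuous (fun s : ℝ => c i * s + b₀) :=
        (continuous_const.mul continuous_id).add continuous_const
      have : Filter.Tendsto (fun s : ℝ => c i * s + b₀) (𝓝 0) (𝓝 b₀) := by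
        have := hcont.tendsto 0
        simpa using this
      exact this.eventually_mem hV
    filter_upwards [this] with s hs
    have : F s = φ (fun i => g (c i * s + b₀)) := by
      rw [hφ_eq]
      apply Finset.sum_congr rfl
      intro i _
      rw [hVeq _ (hs i)]
      ring
    rw [this]
    exact hWker _ (hcon s)
  -- compute the k-th derivative of F at 0
  have hsmooth : ∀ i : Fin N, ContDiff ℝ (k : WithTop ℕ∞) (fun s => G (c i * s + b₀)) := by
    intro i
    exact hG.comp ((contDiff_const.mul contDiff_id).add contDiff_const)
  have hcomp : iteratedDeriv k F 0 = ∑ i, a i * (c i ^ k * iteratedDeriv k G b₀) := by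
    rw [hF]
    rw [my_iteratedDeriv_sum Finset.univ (fun i s => a i * G (c i * s + b₀)) k
      (fun i _ => contDiff_const.mul (hsmooth i)) 0]
    apply Finset.sum_congr rfl
    intro i _
    rw [my_iteratedDeriv_cmul k (hsmooth i) (a i) 0, my_comp_deriv k hG (c i) b₀]
  have hzero : iteratedDeriv k F 0 = 0 := by
    rw [hFev.iteratedDeriv_eq k]
    exact my_iteratedDeriv_zero_fun k 0
  have hGgk : iteratedDeriv k G b₀ = iteratedDeriv k g b₀ := hGg.iteratedDeriv_eq k
  apply hφv
  rw [hφ_eq]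
  rw [hcomp, hGgk] at hzero
  rw [← hzero]
  apply Finset.sum_congr rfl
  intro i _
  ring

lemma my_ext {g : ℝ → ℝ} {b₀ : ℝ} (hg : ContDiffAt ℝ (⊤ : ℕ∞) g b₀) (n : ℕ) :
    ∃ G : ℝ → ℝ, ContDiff ℝ (n : WithTop ℕ∞) G ∧ G =ᶠ[𝓝 b₀] g := by
  obtain ⟨u, hu, hgu⟩ := hg.contDiffOn (m := (n : WithTop ℕ∞)) (by exact_mod_cast le_top) (fun h => by simp at h)
  obtain ⟨R, hR, hball⟩ := Metric.mem_nhds_iff.mp (interior_mem_nhds.mpr hu)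
  have hs : IsOpen (interior u) := isOpen_interior
  have hgs : ContDiffOn ℝ (n : WithTop ℕ∞) g (interior u) := hgu.mono interior_subset
  set φ : ContDiffBump b₀ := ⟨R/3, R/2, by positivity, by linarith⟩
  refine ⟨fun x => φ x * g x, ?_, ?_⟩
  · rw [contDiff_iff_contDiffAt]
    intro x
    by_cases hx : x ∈ ball b₀ R
    · exact (φ.contDiffAt (n := n)).mul ((hgs.contDiffAt (hs.mem_nhds (hball hx))))
    · have hev : (fun y => φ y * g y) =ᶠ[𝓝 x] (fun _ => (0:ℝ)) := by
        have hxo : x ∈ {y : ℝ | R/2 < dist y b₀} := by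
          simp only [Set.mem_setOf_eq]
          have := (not_lt.mp (by simpa [Metric.mem_ball] using hx))
          linarith
        have ho : IsOpen {y : ℝ | R/2 < dist y b₀} :=
          isOpen_lt continuous_const (continuous_id.dist continuous_const)
        filter_upwards [ho.mem_nhds hxo] with y hy
        have : φ y = 0 := φ.zero_of_le_dist (le_of_lt hy)
        simp [this]
      exact (contDiffAt_const (c := (0:ℝ))).congr_of_eventuallyEq hev
  · filter_upwards [φ.eventuallyEq_one] with y hy
    simp [hy]

lemma my_vand {N m : ℕ} (c : Fin N → ℝ) (hc : Function.Injective c) (hm : m ≤ N)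
    (D : ℕ → ℝ) (hD : ∀ k : ℕ, k < m → D k ≠ 0) :
    LinearIndependent ℝ (fun k : Fin m => fun i : Fin N => c i ^ (k : ℕ) * D (k : ℕ)) := by
  have hw : LinearIndependent ℝ (fun k : Fin m => fun i : Fin N => c i ^ (k : ℕ)) := by
    set v : Fin m → ℝ := fun l => c (Fin.castLE hm l)
    have hv : Function.Injective v := fun a b hab => by
      have := hc hab
      exact Fin.castLE_injective hm this
    have hdet : (Matrix.vandermonde v).det ≠ 0 :=
      Matrix.det_vandermonde_ne_zero_iff.mpr hv
    have hcols : LinearIndependent ℝ (fun k : Fin m => (Matrix.vandermonde v)ᵀ k) :=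
      Matrix.linearIndependent_cols_iff_isUnit.mpr
        ((Matrix.isUnit_iff_isUnit_det _).mpr (isUnit_iff_ne_zero.mpr hdet))
    set π : (Fin N → ℝ) →ₗ[ℝ] (Fin m → ℝ) := LinearMap.funLeft ℝ ℝ (Fin.castLE hm)
    apply LinearIndependent.of_comp π
    have : π ∘ (fun k : Fin m => fun i : Fin N => c i ^ (k : ℕ))
        = fun k : Fin m => (Matrix.vandermonde v)ᵀ k := by
      funext k l
      simp [π, Matrix.vandermonde, LinearMap.funLeft, v]
    rw [this]
    exact hcols
  have := hw.units_smul (fun k : Fin m => Units.mk0 (D (k : ℕ)) (hD k k.isLt))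
  have heq : (fun k : Fin m => fun i : Fin N => c i ^ (k : ℕ) * D (k : ℕ))
      = (fun k : Fin m => Units.mk0 (D (k : ℕ)) (hD k k.isLt)) • (fun k : Fin m => fun i : Fin N => c i ^ (k : ℕ)) := by
    funext k i
    simp [Pi.smul_apply, mul_comm]
  rw [heq]
  exact this

theorem stmt_2 (N m : ℕ) (g : ℝ → ℝ) (b₀ : ℝ)
    (hg : ContDiffAt ℝ (⊤ : ℕ∞) g b₀)
    (hder : ∀ k : ℕ, k ≤ m - 1 → iteratedDeriv k g b₀ ≠ 0)
    (c : Fin N → ℝ) (hc : Function.Injective c) (hc0 : ∀ i, c i ≠ 0)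
    (hm : m ≤ N) :
    ∃ t : Fin m → ℝ,
      LinearIndependent ℝ (fun j : Fin m => fun i : Fin N => g (c i * t j + b₀)) := by
  set vec : ℝ → (Fin N → ℝ) := fun s => fun i => g (c i * s + b₀) with hvec
  set v : Fin m → (Fin N → ℝ) := fun k => fun i => c i ^ (k : ℕ) * iteratedDeriv (k : ℕ) g b₀
    with hv
  have hvind : LinearIndependent ℝ v :=
    my_vand c hc hm (fun k => iteratedDeriv k g b₀)
      (fun k hk => hder k (Nat.le_pred_of_lt hk))
  suffices H : ∀ n : ℕ, n ≤ m → ∃ t : Fin n → ℝ,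
      LinearIndependent ℝ (fun j : Fin n => vec (t j)) by
    obtain ⟨t, ht⟩ := H m le_rfl
    exact ⟨t, ht⟩
  intro n
  induction n with
  | zero =>
    intro _
    exact ⟨fun j => 0, linearIndependent_empty_type⟩
  | succ n ih =>
    intro hn
    obtain ⟨t, ht⟩ := ih (le_trans (Nat.le_succ n) hn)
    set W : Submodule ℝ (Fin N → ℝ) :=
      Submodule.span ℝ (Set.range (fun j : Fin n => vec (t j))) with hW
    -- some v k is not in W
    have hex : ∃ k : Fin m, v k ∉ W := by
      by_contra hall
      push_neg at hall
      have hres : LinearIndependent ℝ (fun k : Fin m => (⟨v k, hall k⟩ : W)) := by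
        apply LinearIndependent.of_comp W.subtype
        convert hvind using 1
        rfl
      have h1 : m ≤ Module.finrank ℝ W := by
        simpa using hres.fintype_card_le_finrank
      have h2 : Module.finrank ℝ W ≤ n := by
        classical
        haveI : Fintype (Set.range (fun j : Fin n => vec (t j))) := Set.fintypeRange _
        refine le_trans (finrank_span_le_card (Set.range (fun j : Fin n => vec (t j)))) ?_
        rw [Set.toFinset_card]
        simpa using Fintype.card_range_le (fun j : Fin n => vec (t j))
      omega
    obtain ⟨k, hk⟩ := hex
    obtain ⟨G, hG, hGg⟩ := my_ext hg (k : ℕ)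
    obtain ⟨s, hs⟩ := my_escape (k : ℕ) hG hGg c W hk
    refine ⟨(Fin.cons s t : Fin (n+1) → ℝ), ?_⟩
    have hgoal : LinearIndependent ℝ
        (Fin.cons (vec s) (fun j : Fin n => vec (t j)) : Fin (n+1) → (Fin N → ℝ)) :=
      linearIndependent_fin_cons.mpr ⟨ht, fun hmem => hs hmem⟩
    convert hgoal using 1
    funext j
    refine Fin.cases ?_ (fun j' => ?_) j <;> rfl

end
end

section
/- Let g : R → R be a polynomial of degree p, X an N × d real matrix, W a d × m real matrix, b a row vector in R^m, and 1 the all-ones column vector in R^N. Then the rank of the N × m matrix g(XW + 1b), obtained by applying g entrywise, is at most binomial(d + p, p). -/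
theorem stmt_4 (N d m : ℕ) (p : Polynomial ℝ)
    (X : Matrix (Fin N) (Fin d) ℝ) (W : Matrix (Fin d) (Fin m) ℝ) (b : Fin m → ℝ) :
    ((X * W + Matrix.of fun _ j => b j).map (fun t => p.eval t)).rank
      ≤ (d + p.natDegree).choose p.natDegree := by
  classical
  set n := p.natDegree with hn
  -- vectors with homogenizing coordinate
  set v : Fin N → Fin (d + 1) → ℝ := fun i => Fin.cons 1 (X i) with hv
  set u : Fin m → Fin (d + 1) → ℝ := fun j => Fin.cons (b j) (fun l => W l j) with hu
  -- fiber map from functions to multisets of size n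
  set ψ : (k : Fin (n + 1)) → (Fin (k : ℕ) → Fin (d + 1)) → Sym (Fin (d + 1)) n :=
    fun k f => ⟨Multiset.replicate (n - (k : ℕ)) 0 + Finset.univ.val.map f, by
      have := k.is_le
      simp [Multiset.card_replicate]
      omega⟩ with hψ
  set A : Matrix (Fin N) (Sym (Fin (d + 1)) n) ℝ :=
    fun i s => ((s : Multiset (Fin (d + 1))).map (v i)).prod with hA
  set B : Matrix (Sym (Fin (d + 1)) n) (Fin m) ℝ :=
    fun s j => ∑ k : Fin (n + 1),
      ∑ f ∈ Finset.univ.filter (fun f : Fin (k : ℕ) → Fin (d + 1) => ψ k f = s),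
        p.coeff (k : ℕ) * ∏ t, u j (f t) with hB
  have key : ((X * W + Matrix.of fun _ j => b j).map (fun t => p.eval t)) = A * B := by
    ext i j
    rw [Matrix.map_apply, Matrix.mul_apply]
    have hentry : (X * W + (Matrix.of fun _ j => b j) : Matrix (Fin N) (Fin m) ℝ) i j = ∑ l, v i l * u j l := by
      rw [Fin.sum_univ_succ]
      simp [hv, hu, Matrix.mul_apply, Matrix.add_apply]
      ring
    rw [hentry, Polynomial.eval_eq_sum_range, ← hn,
      ← Fin.sum_univ_eq_sum_range (fun k => p.coeff k * (∑ l, v i l * u j l) ^ k)]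
    -- expand RHS
    have : ∀ s : Sym (Fin (d + 1)) n, A i s * B s j
        = ∑ k : Fin (n + 1),
            ∑ f ∈ Finset.univ.filter (fun f : Fin (k : ℕ) → Fin (d + 1) => ψ k f = s),
              A i (ψ k f) * (p.coeff (k : ℕ) * ∏ t, u j (f t)) := by
      intro s
      rw [hB, Finset.mul_sum]
      refine Finset.sum_congr rfl fun k _ => ?_
      rw [Finset.mul_sum]
      refine Finset.sum_congr rfl fun f hf => ?_
      rw [Finset.mem_filter] at hf
      rw [hf.2]
    rw [Finset.sum_congr rfl fun s _ => this s, Finset.sum_comm]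
    refine Finset.sum_congr rfl fun k _ => ?_
    rw [Finset.sum_fiberwise Finset.univ (fun f => ψ k f)
      (fun f => A i (ψ k f) * (p.coeff (k : ℕ) * ∏ t, u j (f t)))]
    have hAψ : ∀ f : Fin (k : ℕ) → Fin (d + 1), A i (ψ k f) = ∏ t, v i (f t) := by
      intro f
      simp only [hA, hψ, Sym.coe_mk]
      rw [Multiset.map_add, Multiset.prod_add, Multiset.map_replicate,
        Multiset.prod_replicate, Multiset.map_map]
      have h0 : v i 0 = 1 := by simp [hv]
      rw [h0, one_pow, one_mul]
      rfl
    calc p.coeff (k : ℕ) * (∑ l, v i l * u j l) ^ (k : ℕ)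
        = p.coeff (k : ℕ) * ∑ f : Fin (k : ℕ) → Fin (d + 1), ∏ t, (v i (f t) * u j (f t)) := by
          rw [Fintype.sum_pow (fun l => v i l * u j l) (k : ℕ)]
      _ = ∑ f : Fin (k : ℕ) → Fin (d + 1),
            A i (ψ k f) * (p.coeff (k : ℕ) * ∏ t, u j (f t)) := by
          rw [Finset.mul_sum]
          refine Finset.sum_congr rfl fun f _ => ?_
          rw [hAψ f, Finset.prod_mul_distrib]
          ring
  rw [key]
  calc (A * B).rank ≤ A.rank := Matrix.rank_mul_le_left A B
    _ ≤ Fintype.card (Sym (Fin (d + 1)) n) := Matrix.rank_le_card_width A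
    _ = (d + n).choose n := by
        rw [Sym.card_sym_eq_choose]
        simp
end
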